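/- arXiv:1303.0127 — 2 statements merged into one kernel-verified Lean document; each statement's English description precedes it below -/
import Mathlib

section
/- Let H = ℓ²(ℕ) and let E_can be the canonical phase observable, defined on Borel sets Θ ⊆ [0,2π) by ⟨m| E_can(Θ) |n⟩ = (1/2π) ∫_Θ e^{iθ(m-n)} dθ. If a bounded operator A on H commutes with E_can(Θ) for every Borel set Θ ⊆ [0,2π), then A is a scalar multiple of the identity. -/
open MeasureTheory Complex Real
open scoped InnerProductSpace

noncomputable section

/-- The Hilbert space `ℓ²(ℕ)`. -/
abbrev H : Type := lp (fun _ : ℕ => ℂ) 2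

/-- The standard orthonormal basis vector `|n⟩` of `ℓ²(ℕ)`. -/
def ket (n : ℕ) : H := lp.single 2 n 1

/-!
Write `a m k = ⟪ket m, A (ket k)⟫` and `P j x = ∫₀ˣ e^{iθj} dθ`, so that the matrix of
`E_x = E_can([0, x))` is `(2π)⁻¹ P (m - n) x`. Expanding `A E_x = E_x A` in the basis gives,
for every `x ∈ [0, 2π]`,
`∑ₖ a m k · P (k - n) x = ∑ₖ a k n · P (m - k) x`.
Since `‖P j x‖ ≤ 2 / |j|` and the rows and columns of `A` are square summable, both sides can be
integrated termwise against `e^{-isx}`; as `∫₀^{2π} P j x e^{-isx} dx = (2πi/s)(δ_{j0} - δ_{js})`,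
this yields `a m (n + s) = a (m - s) n`, entries with a negative index being `0`. The shifts
`s = ±1` say that `A` commutes with the unilateral shift and its adjoint, which forces
`a m n = δ_{mn} a 0 0`.
-/

lemma summable_mul_of_summable_sq {u v : ℕ → ℝ} (hu : Summable fun k => u k ^ 2)
    (hv : Summable fun k => v k ^ 2) : Summable fun k => u k * v k := by
  refine Summable.of_norm_bounded ((hu.add hv).div_const 2) fun k => ?_
  rw [Real.norm_eq_abs, abs_mul]
  nlinarith [sq_nonneg (|u k| - |v k|), sq_abs (u k), sq_abs (v k)]

lemma integral_tsum_mul_of_summable_sq {α : Type*} [MeasurableSpace α] {μ : Measure α}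
    [IsFiniteMeasure μ] {u : ℕ → ℂ} {f : ℕ → α → ℂ} {c : ℕ → ℝ}
    (hu : Summable fun k => ‖u k‖ ^ 2) (hc : Summable fun k => c k ^ 2)
    (hf : ∀ k, Integrable (f k) μ) (hfc : ∀ᶠ k in Filter.cofinite, ∀ᵐ x ∂μ, ‖f k x‖ ≤ c k) :
    ∫ x, ∑' k, u k * f k x ∂μ = ∑' k, u k * ∫ x, f k x ∂μ := by
  have hsum : Summable fun k => ∫ x, ‖u k * f k x‖ ∂μ := by
    refine .of_norm_bounded_eventually
      ((summable_mul_of_summable_sq hu hc).mul_right (μ.real Set.univ)) ?_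
    filter_upwards [hfc] with k hk
    rw [Real.norm_of_nonneg (integral_nonneg fun _ => norm_nonneg _)]
    calc ∫ x, ‖u k * f k x‖ ∂μ ≤ ∫ _, ‖u k‖ * c k ∂μ := by
          refine integral_mono_ae ((hf k).const_mul (u k)).norm (integrable_const _) ?_
          filter_upwards [hk] with x hx
          rw [norm_mul]
          gcongr
      _ = ‖u k‖ * c k * μ.real Set.univ := by rw [integral_const, smul_eq_mul, mul_comm]
  rw [← integral_tsum_of_summable_integral_norm (fun k => (hf k).const_mul (u k)) hsum]
  simp only [integral_const_mul]

lemma eq_ite_of_succ_succ {β : Type*} [Zero β] {a : ℕ → ℕ → β}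
    (hsucc : ∀ m n, a (m + 1) (n + 1) = a m n) (hrow : ∀ n, a 0 (n + 1) = 0)
    (hcol : ∀ m, a (m + 1) 0 = 0) (m n : ℕ) : a m n = if m = n then a 0 0 else 0 := by
  induction m generalizing n with
  | zero => cases n <;> simp [hrow]
  | succ m ih => cases n <;> simp [hsucc, hcol, ih]

lemma inner_ket_left (k : ℕ) (y : H) : ⟪ket k, y⟫_ℂ = y k := by
  simp [ket, lp.inner_single_left]

lemma inner_ket_ket (m n : ℕ) : ⟪ket m, ket n⟫_ℂ = if m = n then 1 else 0 := by
  rw [inner_ket_left, ket, lp.single_apply, Pi.single_apply]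

lemma hasSum_apply_mul_inner_ket (T : H →L[ℂ] H) (f : H) (m : ℕ) :
    HasSum (fun k => f k * ⟪ket m, T (ket k)⟫_ℂ) ⟪ket m, T f⟫_ℂ := by
  have hf : HasSum (fun k => f k • ket k) f := by
    simpa [ket, ← lp.single_smul] using lp.hasSum_single ENNReal.ofNat_ne_top f
  simpa [inner_smul_right] using ((innerSL ℂ (ket m)).comp T).hasSum hf

lemma ext_inner_ket {T S : H →L[ℂ] H}
    (h : ∀ m n, ⟪ket m, T (ket n)⟫_ℂ = ⟪ket m, S (ket n)⟫_ℂ) : T = S := by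
  refine ContinuousLinearMap.ext fun f => lp.ext (funext fun m => ?_)
  rw [← inner_ket_left, ← inner_ket_left, ← (hasSum_apply_mul_inner_ket T f m).tsum_eq,
    ← (hasSum_apply_mul_inner_ket S f m).tsum_eq]
  simp only [h]

lemma summable_norm_apply_sq (g : H) : Summable fun k => ‖g k‖ ^ 2 := by
  simpa using (lp.memℓp g).summable (by norm_num)

lemma summable_norm_inner_ket_sq_left (T : H →L[ℂ] H) (m : ℕ) :
    Summable fun k => ‖⟪ket m, T (ket k)⟫_ℂ‖ ^ 2 := by
  refine (summable_norm_apply_sq (ContinuousLinearMap.adjoint T (ket m))).congr fun k => ?_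
  rw [← inner_ket_left, ContinuousLinearMap.adjoint_inner_right, ← inner_conj_symm, norm_conj]

lemma summable_norm_inner_ket_sq_right (T : H →L[ℂ] H) (n : ℕ) :
    Summable fun k => ‖⟪ket k, T (ket n)⟫_ℂ‖ ^ 2 := by
  simpa [inner_ket_left] using summable_norm_apply_sq (T (ket n))

lemma hasSum_mul_ite_natCast_eq (u : ℕ → ℂ) (t : ℤ) :
    HasSum (fun k : ℕ => u k * if (k : ℤ) = t then 1 else 0) (if 0 ≤ t then u t.toNat else 0) := by
  split_ifs with ht
  · convert hasSum_ite_eq t.toNat (u t.toNat) using 2 with k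
    split_ifs <;> grind
  · convert hasSum_zero with k
    grind

def phasePrimitive (j : ℤ) (x : ℝ) : ℂ := ∫ θ in (0 : ℝ)..x, cexp (I * θ * j)

lemma hasDerivAt_phasePrimitive (j : ℤ) (x : ℝ) :
    HasDerivAt (phasePrimitive j) (cexp (I * x * j)) x :=
  ((by fun_prop : Continuous fun θ : ℝ => cexp (I * θ * j)).integral_hasStrictDerivAt
    0 x).hasDerivAt

lemma phasePrimitive_of_ne_zero {j : ℤ} (hj : j ≠ 0) (x : ℝ) :
    phasePrimitive j x = (cexp (I * x * j) - 1) / (I * j) := by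
  have hIj : I * (j : ℂ) ≠ 0 := mul_ne_zero I_ne_zero (Int.cast_ne_zero.2 hj)
  have : (fun θ : ℝ => cexp (I * θ * j)) = fun θ : ℝ => cexp (I * j * θ) := by
    funext θ; ring_nf
  rw [phasePrimitive, this, integral_exp_mul_complex hIj]
  simp [mul_right_comm I]

lemma norm_phasePrimitive_le {j : ℤ} (hj : j ≠ 0) (x : ℝ) :
    ‖phasePrimitive j x‖ ≤ 2 / |(j : ℝ)| := by
  have hexp : ‖cexp (I * x * j)‖ = 1 := by
    rw [show I * x * j = ((x * j : ℝ) : ℂ) * I by push_cast; ring, norm_exp_ofReal_mul_I]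
  rw [phasePrimitive_of_ne_zero hj, norm_div, norm_mul, norm_I, one_mul, norm_intCast]
  gcongr
  calc ‖cexp (I * x * j) - 1‖ ≤ ‖cexp (I * x * j)‖ + ‖(1 : ℂ)‖ := norm_sub_le _ _
    _ = 2 := by rw [hexp, norm_one]; norm_num

lemma phasePrimitive_two_pi (j : ℤ) :
    phasePrimitive j (2 * π) = if j = 0 then (2 * π : ℂ) else 0 := by
  split_ifs with hj
  · simp [phasePrimitive, hj]
  · rw [phasePrimitive_of_ne_zero hj,
      show I * ↑(2 * π) * j = j * (2 * π * I) by push_cast; ring, exp_int_mul_two_pi_mul_I,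
      sub_self, zero_div]

lemma integral_phasePrimitive_mul_exp (j : ℤ) {s : ℤ} (hs : s ≠ 0) :
    ∫ x in (0 : ℝ)..2 * π, phasePrimitive j x * cexp (-(I * x * s))
      = 2 * π * I / s * ((if j = 0 then 1 else 0) - if j = s then 1 else 0) := by
  have hs' : (s : ℂ) ≠ 0 := Int.cast_ne_zero.2 hs
  have hv : ∀ x : ℝ, HasDerivAt (fun x : ℝ => I / s * cexp (-(I * x * s)))
      (cexp (-(I * x * s))) x := by
    intro x
    have h := ((hasDerivAt_mul_const (-(I * s))).comp_ofReal (z := x)).cexp.const_mul (I / s)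
    refine (h.congr_deriv ?_).congr_of_eventuallyEq (.of_forall fun y => ?_)
    · field_simp; ring_nf; simp
    · ring_nf
  rw [intervalIntegral.integral_mul_deriv_eq_deriv_mul
    (fun x _ => hasDerivAt_phasePrimitive j x) (fun x _ => hv x)
    ((by fun_prop : Continuous fun x : ℝ => cexp (I * x * j)).intervalIntegrable _ _)
    ((by fun_prop : Continuous fun x : ℝ => cexp (-(I * x * s))).intervalIntegrable _ _)]
  have hprod : ∀ x : ℝ, cexp (I * x * j) * (I / s * cexp (-(I * x * s)))
      = I / s * cexp (I * x * ((j - s : ℤ) : ℂ)) := by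
    intro x
    rw [mul_left_comm, ← Complex.exp_add]
    push_cast
    ring_nf
  have hperiod : cexp (-(I * ↑(2 * π) * s)) = 1 := by
    rw [show -(I * ↑(2 * π) * s) = ((-s : ℤ) : ℂ) * (2 * π * I) by push_cast; ring,
      exp_int_mul_two_pi_mul_I]
  simp_rw [hprod, intervalIntegral.integral_const_mul]
  rw [← phasePrimitive, phasePrimitive_two_pi, phasePrimitive_two_pi, hperiod]
  simp only [phasePrimitive, intervalIntegral.integral_same, sub_eq_zero]
  split_ifs <;> first | omega | ring

lemma setIntegral_Ico_eq_phasePrimitive (m n : ℕ) {x : ℝ} (hx : 0 ≤ x) :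
    ∫ θ in Set.Ico 0 x, cexp (I * θ * ((m : ℂ) - (n : ℂ))) = phasePrimitive (m - n) x := by
  rw [phasePrimitive, intervalIntegral.integral_of_le hx, integral_Ico_eq_integral_Ioo,
    integral_Ioc_eq_integral_Ioo]
  push_cast
  rfl

lemma continuous_phasePrimitive (j : ℤ) : Continuous (phasePrimitive j) :=
  continuous_iff_continuousAt.2 fun x => (hasDerivAt_phasePrimitive j x).continuousAt

lemma summable_two_div_abs_sq {e : ℕ → ℤ} (he : Function.Injective e) :
    Summable fun k => (2 / |(e k : ℝ)|) ^ 2 :=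
  (((Real.summable_one_div_int_pow.2 one_lt_two).comp_injective he).mul_left 4).congr fun k => by
    rw [div_pow, sq_abs]; norm_num [div_eq_mul_inv]

lemma integral_tsum_mul_phasePrimitive {u : ℕ → ℂ} (hu : Summable fun k => ‖u k‖ ^ 2)
    {e : ℕ → ℤ} (he : Function.Injective e) {s : ℤ} (hs : s ≠ 0) :
    ∫ x in (0 : ℝ)..2 * π, (∑' k, u k * phasePrimitive (e k) x) * cexp (-(I * x * s))
      = 2 * π * I / s * ∑' k, u k * ((if e k = 0 then 1 else 0) - if e k = s then 1 else 0) := by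
  have hbound : ∀ᶠ k in Filter.cofinite, ∀ᵐ x ∂(volume.restrict (Set.Ioc 0 (2 * π))),
      ‖phasePrimitive (e k) x * cexp (-(I * x * s))‖ ≤ 2 / |(e k : ℝ)| := by
    filter_upwards [he.tendsto_cofinite.eventually (Filter.eventually_cofinite_ne 0)] with k hk
    refine ae_of_all _ fun x => ?_
    simpa [Complex.norm_exp] using norm_phasePrimitive_le hk x
  have hmul : ∀ x : ℝ, (∑' k, u k * phasePrimitive (e k) x) * cexp (-(I * x * s))
      = ∑' k, u k * (phasePrimitive (e k) x * cexp (-(I * x * s))) := fun x => by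
    rw [← tsum_mul_right]; exact tsum_congr fun k => mul_assoc _ _ _
  simp_rw [hmul, intervalIntegral.integral_of_le two_pi_pos.le]
  rw [integral_tsum_mul_of_summable_sq
    (f := fun k x => phasePrimitive (e k) x * cexp (-(I * x * s))) hu (summable_two_div_abs_sq he)
    (fun k => ((continuous_phasePrimitive _).mul (by fun_prop)).integrableOn_Ioc) hbound,
    ← tsum_mul_left]
  simp_rw [← intervalIntegral.integral_of_le two_pi_pos.le, integral_phasePrimitive_mul_exp _ hs,
    mul_left_comm]

lemma tsum_inner_ket_mul_phasePrimitive_comm {E A : H →L[ℂ] H} {x : ℝ}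
    (hE : ∀ p q : ℕ, ⟪ket p, E (ket q)⟫_ℂ = (2 * π)⁻¹ * phasePrimitive (p - q) x)
    (hA : A ∘L E = E ∘L A) (m n : ℕ) :
    ∑' k, ⟪ket m, A (ket k)⟫_ℂ * phasePrimitive (k - n) x
      = ∑' k, ⟪ket k, A (ket n)⟫_ℂ * phasePrimitive (m - k) x := by
  have hAE := hasSum_apply_mul_inner_ket A (E (ket n)) m
  have hEA := hasSum_apply_mul_inner_ket E (A (ket n)) m
  simp_rw [← inner_ket_left, hE] at hAE hEA
  refine mul_left_cancel₀ (a := (((2 * π)⁻¹ : ℝ) : ℂ)) (by simp [pi_ne_zero]) ?_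
  calc _ = ∑' k : ℕ, (2 * π)⁻¹ * phasePrimitive (k - n) x * ⟪ket m, A (ket k)⟫_ℂ := by
        rw [← tsum_mul_left]; exact tsum_congr fun k => by ring
    _ = ⟪ket m, A (E (ket n))⟫_ℂ := hAE.tsum_eq
    _ = ⟪ket m, E (A (ket n))⟫_ℂ := by rw [← ContinuousLinearMap.comp_apply, hA]; rfl
    _ = ∑' k, ⟪ket k, A (ket n)⟫_ℂ * ((2 * π)⁻¹ * phasePrimitive (m - k) x) := hEA.tsum_eq.symm
    _ = _ := by rw [← tsum_mul_left]; exact tsum_congr fun k => by ring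

lemma inner_ket_shift_eq {E : ℝ → H →L[ℂ] H} {A : H →L[ℂ] H}
    (hE : ∀ x ∈ Set.Icc 0 (2 * π), ∀ p q : ℕ,
      ⟪ket p, E x (ket q)⟫_ℂ = (2 * π)⁻¹ * phasePrimitive (p - q) x)
    (hA : ∀ x ∈ Set.Icc 0 (2 * π), A ∘L E x = E x ∘L A) (m n : ℕ) {s : ℤ} (hs : s ≠ 0) :
    (if 0 ≤ (n : ℤ) + s then ⟪ket m, A (ket ((n : ℤ) + s).toNat)⟫_ℂ else 0)
      = if 0 ≤ (m : ℤ) - s then ⟪ket ((m : ℤ) - s).toNat, A (ket n)⟫_ℂ else 0 := by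
  have hcomm :
      ∫ x in (0 : ℝ)..2 * π,
        (∑' k : ℕ, ⟪ket m, A (ket k)⟫_ℂ * phasePrimitive (k - n) x) * cexp (-(I * x * s))
      = ∫ x in (0 : ℝ)..2 * π,
        (∑' k : ℕ, ⟪ket k, A (ket n)⟫_ℂ * phasePrimitive (m - k) x) * cexp (-(I * x * s)) :=
    intervalIntegral.integral_congr fun x hx => by
      rw [Set.uIcc_of_le two_pi_pos.le] at hx
      simp only [tsum_inner_ket_mul_phasePrimitive_comm (hE x hx) (hA x hx)]
  rw [integral_tsum_mul_phasePrimitive (summable_norm_inner_ket_sq_left A m)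
      (e := fun k => k - n) (fun k l h => by simpa using h) hs,
    integral_tsum_mul_phasePrimitive (summable_norm_inner_ket_sq_right A n)
      (e := fun k => m - k) (fun k l h => by simpa using h) hs] at hcomm
  have hrow := (hasSum_mul_ite_natCast_eq (fun k => ⟪ket m, A (ket k)⟫_ℂ) n).sub
    (hasSum_mul_ite_natCast_eq (fun k => ⟪ket m, A (ket k)⟫_ℂ) (n + s))
  have hcol := (hasSum_mul_ite_natCast_eq (fun k => ⟪ket k, A (ket n)⟫_ℂ) m).sub
    (hasSum_mul_ite_natCast_eq (fun k => ⟪ket k, A (ket n)⟫_ℂ) (m - s))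
  rw [(hrow.congr_fun fun k => by split_ifs <;> first | omega | ring).tsum_eq,
    (hcol.congr_fun fun k => by split_ifs <;> first | omega | ring).tsum_eq] at hcomm
  have hc : (2 * π * I / s : ℂ) ≠ 0 := by simp [pi_ne_zero, hs]
  simpa using mul_left_cancel₀ hc hcomm

/-- If a bounded operator `A` on `ℓ²(ℕ)` commutes with every effect `E_can(Θ)` of the
canonical phase observable, given by the matrix elements
`⟨m|E_can(Θ)|n⟩ = (2π)⁻¹ ∫_Θ e^{iθ(m-n)} dθ`, then `A` is a scalar multiple of the
identity. -/
theorem stmt1 (Ecan : Set ℝ → H →L[ℂ] H)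
    (hEcan : ∀ Θ : Set ℝ, MeasurableSet Θ → Θ ⊆ Set.Ico 0 (2*π) →
      ∀ m n : ℕ, ⟪ket m, Ecan Θ (ket n)⟫_ℂ
        = (2*π)⁻¹ * ∫ θ in Θ, Complex.exp (Complex.I * θ * ((m : ℂ) - (n : ℂ))))
    (A : H →L[ℂ] H)
    (hA : ∀ Θ : Set ℝ, MeasurableSet Θ → Θ ⊆ Set.Ico 0 (2*π) →
      A ∘L Ecan Θ = Ecan Θ ∘L A) :
    ∃ c : ℂ, A = c • (1 : H →L[ℂ] H) := by
  have hIco : ∀ x ∈ Set.Icc 0 (2 * π), Set.Ico 0 x ⊆ Set.Ico 0 (2 * π) :=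
    fun x hx => Set.Ico_subset_Ico_right hx.2
  have hshift := inner_ket_shift_eq (E := fun x => Ecan (Set.Ico 0 x)) (A := A)
    (fun x hx p q => by
      rw [hEcan _ measurableSet_Ico (hIco x hx), setIntegral_Ico_eq_phasePrimitive p q hx.1])
    (fun x hx => hA _ measurableSet_Ico (hIco x hx))
  have hnonneg : ∀ k : ℕ, (0 : ℤ) ≤ k + 1 := fun k => by omega
  have hentry := eq_ite_of_succ_succ (a := fun m n => ⟪ket m, A (ket n)⟫_ℂ)
    (fun m n => by simpa [hnonneg] using hshift (m + 1) n one_ne_zero)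
    (fun n => by simpa [hnonneg] using hshift 0 n one_ne_zero)
    (fun m => by simpa [hnonneg] using (hshift m 0 (s := -1) (by norm_num)).symm)
  refine ⟨⟪ket 0, A (ket 0)⟫_ℂ, ext_inner_ket fun m n => ?_⟩
  rw [hentry]
  simp [inner_ket_ket]
end
end

section
/- For every n ∈ ℕ and x ∈ ℝ, Σ_{m=0}^{n} (-1)^m · C(n,m) · L_m(x) = x^n / n!, where L_m denotes the m-th Laguerre polynomial and C(n,m) the binomial coefficient. -/
/-! Binomial inversion: exchanging the two sums leaves, as the coefficient of
`(-1)^j x^j / j!`, the alternating sum `Σ_m (-1)^m C(n,m) C(m,j)`. Since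
`C(n,m) C(m,j) = C(n,j) C(n-j,m-j)`, this is `(-1)^j C(n,j) (1 - 1)^(n-j)`, which vanishes
unless `j = n`. -/

noncomputable section

/-- The `n`-th Laguerre polynomial, `L n x = Σ_{j=0}^{n} C(n,j) (-1)^j x^j / j!`. -/
def laguerre (n : ℕ) (x : ℝ) : ℝ :=
  ∑ j ∈ Finset.range (n + 1), (n.choose j : ℝ) * (-1) ^ j * x ^ j / (Nat.factorial j : ℝ)

open Finset
open scoped Nat

theorem alternating_sum_range_choose_mul_choose (n j : ℕ) :
    ∑ m ∈ range (n + 1), (-1 : ℤ) ^ m * (n.choose m * m.choose j)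
      = if j = n then (-1) ^ n else 0 := by
  rcases lt_or_ge n j with hnj | hjn
  · rw [if_neg hnj.ne']
    refine sum_eq_zero fun m hm => ?_
    rw [Nat.choose_eq_zero_of_lt (n := m) (k := j) (by rw [mem_range] at hm; omega)]
    simp
  obtain ⟨d, rfl⟩ := Nat.exists_eq_add_of_le hjn
  have below_j : ∑ m ∈ range j, (-1 : ℤ) ^ m * ((j + d).choose m * m.choose j) = 0 :=
    sum_eq_zero fun m hm => by rw [Nat.choose_eq_zero_of_lt (n := m) (mem_range.mp hm)]; simp
  have shifted (k : ℕ) : (-1 : ℤ) ^ (j + k) * ((j + d).choose (j + k) * (j + k).choose j)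
      = (-1) ^ j * (j + d).choose j * ((-1) ^ k * d.choose k) := by
    rw [← Nat.cast_mul, Nat.choose_mul (Nat.le_add_right j k)]
    simp only [Nat.add_sub_cancel_left, Nat.cast_mul]
    ring
  rw [add_assoc, sum_range_add, below_j, zero_add]
  simp only [shifted, ← mul_sum, Int.alternating_sum_range_choose]
  rcases eq_or_ne d 0 with rfl | hd
  · simp
  · simp [hd]

theorem laguerre_eq_sum_range {m N : ℕ} (hm : m ≤ N) (x : ℝ) :
    laguerre m x = ∑ j ∈ range (N + 1), (m.choose j : ℝ) * ((-1) ^ j * x ^ j / j !) := by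
  refine sum_subset (range_subset_range.mpr (Nat.succ_le_succ hm)) (fun j _ hj => ?_) |>.trans ?_
  · rw [Nat.choose_eq_zero_of_lt (by simpa using hj)]
    simp
  · exact sum_congr rfl fun j _ => by ring

/-- `Σ_{m=0}^{n} (-1)^m C(n,m) L_m(x) = x^n / n!`. -/
theorem stmt7 (n : ℕ) (x : ℝ) :
    ∑ m ∈ Finset.range (n + 1), (-1 : ℝ) ^ m * (n.choose m : ℝ) * laguerre m x
      = x ^ n / (Nat.factorial n : ℝ) := by
  set c : ℕ → ℝ := fun j => (-1) ^ j * x ^ j / (j ! : ℝ)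
  have inner (j : ℕ) : ∑ m ∈ range (n + 1), (-1 : ℝ) ^ m * (n.choose m * m.choose j)
      = if j = n then (-1) ^ n else 0 := by
    exact_mod_cast alternating_sum_range_choose_mul_choose n j
  calc ∑ m ∈ range (n + 1), (-1 : ℝ) ^ m * n.choose m * laguerre m x
      = ∑ m ∈ range (n + 1), ∑ j ∈ range (n + 1),
          c j * ((-1 : ℝ) ^ m * (n.choose m * m.choose j)) := by
        refine sum_congr rfl fun m hm => ?_
        rw [laguerre_eq_sum_range (mem_range_succ_iff.mp hm), mul_sum]
        exact sum_congr rfl fun j _ => by ring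
    _ = c n * (-1) ^ n := by
        simp only [sum_comm (γ := ℕ), ← mul_sum, inner, mul_ite, mul_zero, sum_ite_eq',
          mem_range, Nat.lt_succ_self, if_true]
    _ = x ^ n / n ! := by
        simp only [c]
        rw [div_mul_eq_mul_div, mul_right_comm, ← mul_pow, neg_one_mul, neg_neg, one_pow, one_mul]
end
end
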